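/- Let i ∈ ℕ, let H be a graph on vertex set [k], let e be a pair of distinct vertices of [k], and let F be a core of H. Then F is in the (i,e)-boundary if and only if H is in the (i,e)-boundary. -/

import Mathlib

open Finset
open scoped Classical

namespace CliqueSA

variable {k : ℕ}

/-- `C` is a vertex cover of the graph `H` on `[k]`. -/
def IsVC (H : SimpleGraph (Fin k)) (C : Finset (Fin k)) : Prop :=
  ∀ ⦃u v : Fin k⦄, H.Adj u v → u ∈ C ∨ v ∈ C

/-- Minimum vertex cover size of a graph on `[k]`. -/
noncomputable def vc (H : SimpleGraph (Fin k)) : ℕ :=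
  sInf {m | ∃ C : Finset (Fin k), IsVC H C ∧ C.card = m}

/-- The edges of a graph on `[k]` as a `Finset`. -/
noncomputable def edgeF (H : SimpleGraph (Fin k)) : Finset (Sym2 (Fin k)) :=
  Finset.univ.filter (fun e => e ∈ H.edgeSet)

/-- Restriction of `H` to the vertex subset `B` (vertex-induced subgraph, on the vertex set `[k]`). -/
def restrict (H : SimpleGraph (Fin k)) (B : Finset (Fin k)) : SimpleGraph (Fin k) where
  Adj u v := H.Adj u v ∧ u ∈ B ∧ v ∈ B
  symm := by constructor; intro u v h; exact ⟨h.1.symm, h.2.2, h.2.1⟩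
  loopless := by constructor; intro u h; exact H.loopless.irrefl u h.1

/-- The non-isolated vertices `V(E(H))` of a graph on `[k]`. -/
noncomputable def suppF (H : SimpleGraph (Fin k)) : Finset (Fin k) :=
  Finset.univ.filter (fun v => v ∈ H.support)

/-- `W` is a minimum vertex cover of `H`. -/
def IsMinVC (H : SimpleGraph (Fin k)) (W : Finset (Fin k)) : Prop :=
  IsVC H W ∧ W.card = vc H

/-- There is a matching in `H` from `U` into `W` covering all of `U`. -/
def MatchableInto (H : SimpleGraph (Fin k)) (U W : Finset (Fin k)) : Prop :=
  ∃ f : Fin k → Fin k, Set.InjOn f ↑U ∧ ∀ u ∈ U, f u ∈ W ∧ H.Adj u (f u)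

/-- `U ⊆ Avail` is maximal (w.r.t. inclusion) with a matching in `H` from `U` into `W`
covering `U`. -/
def MaximalMatched (H : SimpleGraph (Fin k)) (W Avail U : Finset (Fin k)) : Prop :=
  U ⊆ Avail ∧ MatchableInto H U W ∧
    ∀ U', U ⊂ U' → U' ⊆ Avail → ¬ MatchableInto H U' W

/-- `F` is a core of `H`: a vertex-induced subgraph such that every minimum vertex cover of `F`
is a vertex cover of `H`. -/
def IsCore (F H : SimpleGraph (Fin k)) : Prop :=
  (∃ S : Finset (Fin k), F = restrict H S) ∧
    ∀ C : Finset (Fin k), IsVC F C → C.card = vc F → IsVC H C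

/-- `H` is in the `(i,e)`-boundary: `vc(H) = i` and `vc(H ∪ {e}) = i + 1`. -/
def InBoundary (i : ℕ) (H : SimpleGraph (Fin k)) (e : Sym2 (Fin k)) : Prop :=
  vc H = i ∧ vc (H ⊔ SimpleGraph.fromEdgeSet {e}) = i + 1

end CliqueSA


/-!
A core `F` of `H` is a subgraph with `vc F = vc H`, so `vc (F + e) ≤ vc (H + e) ≤ vc H + 1`;
hence if `F` is in the boundary, so is `H`. Conversely, if adding `e` to `F` does not raise
the cover number, a minimum cover of `F + e` is a minimum cover of `F`; it therefore covers `H`,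
and also `e`, so adding `e` to `H` does not raise the cover number either.
-/

namespace CliqueSA

variable {k : ℕ}

lemma IsVC.vc_le {H : SimpleGraph (Fin k)} {C : Finset (Fin k)} (h : IsVC H C) :
    vc H ≤ C.card :=
  Nat.sInf_le ⟨C, h, rfl⟩

lemma exists_isVC_card_eq_vc (H : SimpleGraph (Fin k)) :
    ∃ C : Finset (Fin k), IsVC H C ∧ C.card = vc H :=
  Nat.sInf_mem (s := {m | ∃ C : Finset (Fin k), IsVC H C ∧ C.card = m})
    ⟨_, univ, fun u _ _ => Or.inl (mem_univ u), rfl⟩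

lemma IsVC.anti {G H : SimpleGraph (Fin k)} {C : Finset (Fin k)} (hC : IsVC H C) (h : G ≤ H) :
    IsVC G C :=
  fun _ _ hab => hC (h hab)

lemma vc_mono {G H : SimpleGraph (Fin k)} (h : G ≤ H) : vc G ≤ vc H := by
  obtain ⟨C, hC, hcard⟩ := exists_isVC_card_eq_vc H
  exact hcard ▸ (hC.anti h).vc_le

lemma isVC_sup_iff {G H : SimpleGraph (Fin k)} {C : Finset (Fin k)} :
    IsVC (G ⊔ H) C ↔ IsVC G C ∧ IsVC H C :=
  ⟨fun hC => ⟨hC.anti le_sup_left, hC.anti le_sup_right⟩,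
    fun ⟨hG, hH⟩ _ _ hab => hab.elim (fun h => hG h) (fun h => hH h)⟩

lemma vc_sup_le (G H : SimpleGraph (Fin k)) : vc (G ⊔ H) ≤ vc G + vc H := by
  obtain ⟨C, hC, hCcard⟩ := exists_isVC_card_eq_vc G
  obtain ⟨D, hD, hDcard⟩ := exists_isVC_card_eq_vc H
  have hCD : IsVC (G ⊔ H) (C ∪ D) :=
    isVC_sup_iff.2 ⟨fun _ _ hab => (hC hab).imp (mem_union_left D) (mem_union_left D),
      fun _ _ hab => (hD hab).imp (mem_union_right C) (mem_union_right C)⟩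
  calc vc (G ⊔ H) ≤ (C ∪ D).card := hCD.vc_le
    _ ≤ C.card + D.card := card_union_le C D
    _ = vc G + vc H := by rw [hCcard, hDcard]

lemma vc_fromEdgeSet_singleton_le_one (u v : Fin k) :
    vc (SimpleGraph.fromEdgeSet {s(u, v)}) ≤ 1 := by
  have hu : IsVC (SimpleGraph.fromEdgeSet {s(u, v)}) {u} := by
    intro a b hab
    rw [SimpleGraph.fromEdgeSet_adj, Set.mem_singleton_iff, Sym2.eq_iff] at hab
    rcases hab.1 with ⟨rfl, -⟩ | ⟨-, rfl⟩
    · exact Or.inl (mem_singleton_self a)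
    · exact Or.inr (mem_singleton_self b)
  exact hu.vc_le

namespace IsCore

variable {F H : SimpleGraph (Fin k)}

lemma le (hcore : IsCore F H) : F ≤ H := by
  obtain ⟨⟨S, rfl⟩, -⟩ := hcore
  exact fun _ _ hab => hab.1

lemma vc_eq (hcore : IsCore F H) : vc F = vc H := by
  refine le_antisymm (vc_mono hcore.le) ?_
  obtain ⟨C, hC, hcard⟩ := exists_isVC_card_eq_vc F
  exact hcard ▸ (hcore.2 C hC hcard).vc_le

lemma vc_sup_eq_of_vc_sup_eq (hcore : IsCore F H) {G : SimpleGraph (Fin k)}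
    (hFG : vc (F ⊔ G) = vc F) : vc (H ⊔ G) = vc H := by
  obtain ⟨C, hC, hcard⟩ := exists_isVC_card_eq_vc (F ⊔ G)
  obtain ⟨hCF, hCG⟩ := isVC_sup_iff.1 hC
  have hCH : IsVC H C := hcore.2 C hCF (hcard.trans hFG)
  refine le_antisymm ?_ (vc_mono le_sup_left)
  calc vc (H ⊔ G) ≤ C.card := (isVC_sup_iff.2 ⟨hCH, hCG⟩).vc_le
    _ = vc H := by rw [hcard, hFG, hcore.vc_eq]

end IsCore

theorem core_inBoundary_iff_general (k i : ℕ) (H F : SimpleGraph (Fin k)) (u v : Fin k)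
    (hcore : IsCore F H) :
    InBoundary i F s(u, v) ↔ InBoundary i H s(u, v) := by
  unfold InBoundary
  set E := SimpleGraph.fromEdgeSet {s(u, v)}
  have hvc : vc F = vc H := hcore.vc_eq
  have hFE_le : vc (F ⊔ E) ≤ vc (H ⊔ E) := vc_mono (sup_le_sup_right hcore.le E)
  have hHE_le : vc (H ⊔ E) ≤ vc H + 1 :=
    (vc_sup_le H E).trans (Nat.add_le_add_left (vc_fromEdgeSet_singleton_le_one u v) _)
  constructor
  · rintro ⟨hF, hFE⟩
    exact ⟨hvc ▸ hF, by omega⟩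
  · rintro ⟨hH, hHE⟩
    have hF_le : vc F ≤ vc (F ⊔ E) := vc_mono le_sup_left
    have hFE_ne : vc (F ⊔ E) ≠ vc F := fun h => by
      have := hcore.vc_sup_eq_of_vc_sup_eq h
      omega
    exact ⟨hvc.trans hH, by omega⟩

/-- Proposition `prop:core-boundary`: a core `F` of a graph `H` is in the
`(i,e)`-boundary if and only if `H` is. -/
theorem core_inBoundary_iff (k i : ℕ) (H F : SimpleGraph (Fin k)) (u v : Fin k) (huv : u ≠ v)
    (hcore : IsCore F H) :
    InBoundary i F s(u, v) ↔ InBoundary i H s(u, v) :=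
  core_inBoundary_iff_general k i H F u v hcore

end CliqueSA
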